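/- Let q > 1 and P be a positive integer with P > log_q(G) + log_q(3G) and P > log_q(√3), and let (‖M_n^T‖_∞) be a sequence of positive reals with ‖M_{n+k}^T‖_∞ ≥ q^k ‖M_n^T‖_∞. Suppose for 0 ≤ k ≤ m, j_{2k} ∈ ℤ^d are vectors with either j_{2k} = 0 or ‖j_{2k}‖_∞ ≤ 2G·‖M_{P(2k+1)}^T‖_∞ for k < m, and ‖j_{2m}‖_∞ ≥ 3G·‖M_{P(2m−1)}^T‖_∞ with j_{2m} ≠ 0. Then Σ_{k=0}^{m} j_{2k} ≠ 0. -/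

import Mathlib

/-!
If the sum vanished, `j m` would equal minus the sum of the earlier terms. By the growth of
`Mn`, the bound on the `k`-th earlier term is at most `2 G Mn (P (2m-1))` times `r^{-(m-1-k)}`,
where `r = q^{2P} > 3`. Summing this geometric series bounds `‖j m‖` by
`2 G Mn (P (2m-1)) / (1 - r⁻¹)`, which is less than `3 G Mn (P (2m-1))`.
-/

open Finset

/-- The maximum norm `‖v‖_∞` of an integer vector, as a real number. -/
noncomputable def vecNorm {d : ℕ} (v : Fin d → ℤ) : ℝ :=
  ((Finset.univ.sup fun i => (v i).natAbs : ℕ) : ℝ)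

lemma vecNorm_eq_norm {d : ℕ} (v : Fin d → ℤ) : vecNorm v = ‖v‖ := by
  rw [vecNorm, Pi.norm_def, ← NNReal.coe_natCast, Nat.cast_finsetSup]
  simp only [NNReal.natCast_natAbs]

lemma lt_pow_two_mul_of_logb_sqrt_lt {q a : ℝ} {P : ℕ} (hq : 1 < q) (ha : 0 < a)
    (h : Real.logb q (Real.sqrt a) < P) : a < q ^ (2 * P) := by
  have hs : Real.sqrt a < q ^ P := by
    rwa [Real.logb_lt_iff_lt_rpow hq (Real.sqrt_pos.2 ha), Real.rpow_natCast] at h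
  calc a = Real.sqrt a ^ 2 := (Real.sq_sqrt ha.le).symm
    _ < (q ^ P) ^ 2 := by gcongr
    _ = q ^ (2 * P) := by ring

lemma two_div_one_sub_inv_lt_three {r : ℝ} (hr : 3 < r) : 2 / (1 - r⁻¹) < 3 := by
  have hr' : r⁻¹ < 1 / 3 := by
    rw [inv_lt_comm₀ (by linarith) (by norm_num)]
    simpa using hr
  rw [div_lt_iff₀ (by linarith)]
  linarith

lemma norm_le_sum_norm_of_sum_range_succ_eq_zero {E : Type*} [SeminormedAddCommGroup E]
    {f : ℕ → E} {m : ℕ} (h : ∑ k ∈ range (m + 1), f k = 0) :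
    ‖f m‖ ≤ ∑ k ∈ range m, ‖f k‖ := by
  rw [sum_range_succ, add_eq_zero_iff_eq_neg'] at h
  rw [h, norm_neg]
  exact norm_sum_le _ _

lemma sum_range_le_div_of_le_geometric {a : ℕ → ℝ} {C t : ℝ} {m : ℕ} (hC : 0 ≤ C)
    (ht0 : 0 ≤ t) (ht1 : t < 1) (h : ∀ k < m, a k ≤ C * t ^ (m - 1 - k)) :
    ∑ k ∈ range m, a k ≤ C / (1 - t) := by
  calc ∑ k ∈ range m, a k
      ≤ ∑ k ∈ range m, C * t ^ (m - 1 - k) := sum_le_sum fun k hk => h k (mem_range.1 hk)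
    _ = C * ∑ k ∈ Ico 0 m, t ^ k := by
        rw [← mul_sum, sum_range_reflect (fun k => t ^ k), range_eq_Ico]
    _ ≤ C * (t ^ 0 / (1 - t)) := by gcongr; exact geom_sum_Ico_le_of_lt_one ht0 ht1
    _ = C / (1 - t) := by ring

section Growth

variable {q : ℝ} {M : ℕ → ℝ}

lemma le_inv_pow_mul_of_pow_mul_le (hq : 0 < q) (hgrow : ∀ n k : ℕ, q ^ k * M n ≤ M (n + k))
    (n k : ℕ) : M n ≤ (q ^ k)⁻¹ * M (n + k) := by
  rw [le_inv_mul_iff₀ (by positivity)]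
  exact hgrow n k

lemma le_inv_pow_mul_odd_block (hq : 0 < q)
    (hgrow : ∀ n k : ℕ, q ^ k * M n ≤ M (n + k)) (P : ℕ) {k m : ℕ} (hk : k < m) :
    M (P * (2 * k + 1)) ≤ (q ^ (2 * P))⁻¹ ^ (m - 1 - k) * M (P * (2 * m - 1)) := by
  have hidx : P * (2 * k + 1) + 2 * P * (m - 1 - k) = P * (2 * m - 1) := by
    rw [show 2 * m - 1 = 2 * k + 1 + 2 * (m - 1 - k) by omega]
    ring
  rw [inv_pow, ← pow_mul, ← hidx]
  exact le_inv_pow_mul_of_pow_mul_le hq hgrow _ _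

end Growth

theorem frequency_separation_general {d : ℕ} (q : ℝ) (hq : 1 < q)
    (G P m : ℕ) (hG : 2 ≤ G)
    (hP2 : Real.logb q (Real.sqrt 3) < (P : ℝ))
    (Mn : ℕ → ℝ) (hMpos : ∀ n, 0 < Mn n)
    (hgrow : ∀ n k : ℕ, q ^ k * Mn n ≤ Mn (n + k))
    (j : ℕ → Fin d → ℤ)
    (hsmall : ∀ k < m, j k = 0 ∨ vecNorm (j k) ≤ 2 * (G : ℝ) * Mn (P * (2 * k + 1)))
    (hbig : 3 * (G : ℝ) * Mn (P * (2 * m - 1)) ≤ vecNorm (j m)) :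
    ∑ k ∈ Finset.range (m + 1), j k ≠ 0 := by
  intro hsum
  set M := Mn (P * (2 * m - 1))
  set r := q ^ (2 * P)
  have hr : 3 < r := lt_pow_two_mul_of_logb_sqrt_lt hq (by norm_num) hP2
  have hG0 : (0 : ℝ) < G := by norm_cast; omega
  have hM : 0 < M := hMpos _
  have hterm : ∀ k < m, ‖j k‖ ≤ 2 * G * M * r⁻¹ ^ (m - 1 - k) := by
    intro k hk
    rcases hsmall k hk with hzero | hle
    · rw [hzero, norm_zero]; positivity
    · have hdecay := le_inv_pow_mul_odd_block (by linarith) hgrow P hk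
      rw [← vecNorm_eq_norm]
      calc vecNorm (j k) ≤ 2 * G * Mn (P * (2 * k + 1)) := hle
        _ ≤ 2 * G * M * r⁻¹ ^ (m - 1 - k) := by rw [mul_assoc _ M, mul_comm M]; gcongr
  have hjm : ‖j m‖ ≤ 2 * G * M / (1 - r⁻¹) :=
    (norm_le_sum_norm_of_sum_range_succ_eq_zero hsum).trans
      (sum_range_le_div_of_le_geometric (by positivity) (by positivity)
        (inv_lt_one_of_one_lt₀ (by linarith)) hterm)
  rw [vecNorm_eq_norm] at hbig
  have hcontra : 3 * G * M < G * M * 3 :=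
    calc 3 * G * M ≤ 2 * G * M / (1 - r⁻¹) := hbig.trans hjm
      _ = G * M * (2 / (1 - r⁻¹)) := by ring
      _ < G * M * 3 := by gcongr; exact two_div_one_sub_inv_lt_three hr
  linarith

theorem frequency_separation {d : ℕ} (q : ℝ) (hq : 1 < q)
    (G P m : ℕ) (hG : 2 ≤ G) (hP0 : 0 < P)
    (hP1 : Real.logb q (G : ℝ) + Real.logb q (3 * (G : ℝ)) < (P : ℝ))
    (hP2 : Real.logb q (Real.sqrt 3) < (P : ℝ))
    (Mn : ℕ → ℝ) (hMpos : ∀ n, 0 < Mn n)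
    (hgrow : ∀ n k : ℕ, q ^ k * Mn n ≤ Mn (n + k))
    (j : ℕ → Fin d → ℤ)
    (hsmall : ∀ k < m, j k = 0 ∨ vecNorm (j k) ≤ 2 * (G : ℝ) * Mn (P * (2 * k + 1)))
    (hbig : 3 * (G : ℝ) * Mn (P * (2 * m - 1)) ≤ vecNorm (j m))
    (hjm : j m ≠ 0) :
    ∑ k ∈ Finset.range (m + 1), j k ≠ 0 :=
  frequency_separation_general q hq G P m hG hP2 Mn hMpos hgrow j hsmall hbig
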